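/- arXiv:2208.10124 — 2 statements merged into one kernel-verified Lean document; each statement's English description precedes it below -/
import Mathlib

section
/- For a discrete-time bilinear system x_{k+1} = A x_k + N x_k u_k + B u_k with x_0 = 0, the state x_k for k ≥ 1 lies in the column span of the reachability matrix ℛ_k = [R_1, R_2, …, R_k], where R_1 = B and R_j = [A R_{j−1}, N R_{j−1}], for any input sequence (u_0, u_1, …, u_{k−1}). -/
open Matrix

/-- Index type for the columns of the `j`-th bilinear reachability block
(`iota j` has `2^j` elements; `Rblk j` corresponds to the paper's `R_{j+1}`). -/
def iota : ℕ → Type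
  | 0 => PUnit
  | (j+1) => iota j ⊕ iota j

instance iotaFintype : (j : ℕ) → Fintype (iota j)
  | 0 => inferInstanceAs (Fintype PUnit)
  | (j+1) => @instFintypeSum _ _ (iotaFintype j) (iotaFintype j)

instance iotaDecEq : (j : ℕ) → DecidableEq (iota j)
  | 0 => inferInstanceAs (DecidableEq PUnit)
  | (j+1) => @instDecidableEqSum _ _ (iotaDecEq j) (iotaDecEq j)

/-- Bilinear reachability blocks: `Rblk 0 = B`, `Rblk (j+1) = [A ⬝ Rblk j, N ⬝ Rblk j]`. -/
def Rblk {n : ℕ} (A N : Matrix (Fin n) (Fin n) ℝ) (B : Fin n → ℝ) :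
    (j : ℕ) → Matrix (Fin n) (iota j) ℝ
  | 0 => Matrix.of fun x _ => B x
  | (j+1) => Matrix.fromCols (A * Rblk A N B j) (N * Rblk A N B j)

/-- Bilinear observability blocks: `Oblk 0 = C`, `Oblk (j+1) = [Oblk j ⬝ A; Oblk j ⬝ N]`. -/
def Oblk {n : ℕ} (A N : Matrix (Fin n) (Fin n) ℝ) (C : Fin n → ℝ) :
    (j : ℕ) → Matrix (iota j) (Fin n) ℝ
  | 0 => Matrix.of fun _ y => C y
  | (j+1) => Matrix.fromRows (Oblk A N C j * A) (Oblk A N C j * N)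

/-- Input-product vectors: `Uvec 0 h = u h`,
`Uvec (j+1) h = [Uvec j h; (Uvec j h) * u (h + j + 1)]` (the paper's `u_{j+1}(h)`). -/
def Uvec (u : ℕ → ℝ) : (j : ℕ) → ℕ → iota j → ℝ
  | 0, h, _ => u h
  | (j+1), h, i => Sum.elim (Uvec u j h) (fun i' => Uvec u j h i' * u (h + j + 1)) i

/-- State of the discrete-time bilinear system `x_{k+1} = A x_k + N x_k u_k + B u_k`, `x_0 = 0`. -/
def bstate {n : ℕ} (A N : Matrix (Fin n) (Fin n) ℝ) (B : Fin n → ℝ) (u : ℕ → ℝ) :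
    ℕ → Fin n → ℝ
  | 0 => 0
  | (k+1) => A *ᵥ bstate A N B u k + u k • (N *ᵥ bstate A N B u k) + u k • B


def Sset {n : ℕ} (A N : Matrix (Fin n) (Fin n) ℝ) (B : Fin n → ℝ) (k : ℕ) :
    Set (Fin n → ℝ) :=
  {v : Fin n → ℝ | ∃ J : Fin k, ∃ i : iota (J : ℕ), v = fun x => Rblk A N B (J : ℕ) x i}

lemma mulVec_col {n : ℕ} (A : Matrix (Fin n) (Fin n) ℝ) {ι : Type} [Fintype ι]
    (M : Matrix (Fin n) ι ℝ) (i : ι) :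
    A *ᵥ (fun x => M x i) = fun x => (A * M) x i := by
  funext x
  simp [Matrix.mulVec, Matrix.mul_apply, dotProduct]

lemma spanA {n : ℕ} (A N : Matrix (Fin n) (Fin n) ℝ) (B : Fin n → ℝ) (m : ℕ)
    (v : Fin n → ℝ) (hv : v ∈ Submodule.span ℝ (Sset A N B m)) :
    A *ᵥ v ∈ Submodule.span ℝ (Sset A N B (m+1)) := by
  induction hv using Submodule.span_induction with
  | mem w hw =>
    obtain ⟨J, i, rfl⟩ := hw
    apply Submodule.subset_span
    refine ⟨⟨(J : ℕ)+1, by omega⟩, Sum.inl i, ?_⟩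
    rw [mulVec_col]
    rfl
  | zero => simpa using Submodule.zero_mem _
  | add x y hx hy ihx ihy => rw [Matrix.mulVec_add]; exact Submodule.add_mem _ ihx ihy
  | smul a x hx ihx => rw [Matrix.mulVec_smul]; exact Submodule.smul_mem _ _ ihx

lemma spanN {n : ℕ} (A N : Matrix (Fin n) (Fin n) ℝ) (B : Fin n → ℝ) (m : ℕ)
    (v : Fin n → ℝ) (hv : v ∈ Submodule.span ℝ (Sset A N B m)) :
    N *ᵥ v ∈ Submodule.span ℝ (Sset A N B (m+1)) := by
  induction hv using Submodule.span_induction with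
  | mem w hw =>
    obtain ⟨J, i, rfl⟩ := hw
    apply Submodule.subset_span
    refine ⟨⟨(J : ℕ)+1, by omega⟩, Sum.inr i, ?_⟩
    rw [mulVec_col]
    rfl
  | zero => simpa using Submodule.zero_mem _
  | add x y hx hy ihx ihy => rw [Matrix.mulVec_add]; exact Submodule.add_mem _ ihx ihy
  | smul a x hx ihx => rw [Matrix.mulVec_smul]; exact Submodule.smul_mem _ _ ihx

lemma B_mem {n : ℕ} (A N : Matrix (Fin n) (Fin n) ℝ) (B : Fin n → ℝ) (m : ℕ) :
    B ∈ Submodule.span ℝ (Sset A N B (m+1)) := by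
  apply Submodule.subset_span
  exact ⟨⟨0, Nat.succ_pos m⟩, PUnit.unit, rfl⟩

lemma state_aux {n : ℕ} (A N : Matrix (Fin n) (Fin n) ℝ) (B : Fin n → ℝ) (u : ℕ → ℝ) :
    ∀ k : ℕ, bstate A N B u (k+1) ∈ Submodule.span ℝ (Sset A N B (k+1)) := by
  intro k
  induction k with
  | zero =>
    show A *ᵥ bstate A N B u 0 + u 0 • (N *ᵥ bstate A N B u 0) + u 0 • B ∈ _
    have h0 : bstate A N B u 0 = 0 := rfl
    simp only [h0, Matrix.mulVec_zero, smul_zero, zero_add]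
    exact Submodule.smul_mem _ _ (B_mem A N B 0)
  | succ k ih =>
    show A *ᵥ bstate A N B u (k+1) + u (k+1) • (N *ᵥ bstate A N B u (k+1))
        + u (k+1) • B ∈ _
    refine Submodule.add_mem _ (Submodule.add_mem _ ?_ ?_) ?_
    · exact spanA A N B (k+1) _ ih
    · exact Submodule.smul_mem _ _ (spanN A N B (k+1) _ ih)
    · exact Submodule.smul_mem _ _ (B_mem A N B (k+1))

/-- the state `x_k` lies in the column span of the reachability
matrix `ℛ_k = [R_1, …, R_k]` (here `Rblk J` is the paper's `R_{J+1}`). -/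
theorem state_in_reachability_span {n : ℕ} (A N : Matrix (Fin n) (Fin n) ℝ)
    (B : Fin n → ℝ) (u : ℕ → ℝ) (k : ℕ) (hk : 1 ≤ k) :
    bstate A N B u k ∈
      Submodule.span ℝ
        {v : Fin n → ℝ | ∃ J : Fin k, ∃ i : iota (J : ℕ),
          v = fun x => Rblk A N B (J : ℕ) x i} := by
  obtain ⟨m, rfl⟩ : ∃ m, k = m + 1 := ⟨k - 1, by omega⟩
  exact state_aux A N B u m
end

section
/- For a discrete-time bilinear system x_{k+1} = A x_k + N x_k u_k + B u_k, y_k = C x_k with x_0 = 0, the output satisfies y_k = Σ_{j=1}^{k} (C R_j) · u_j(k−j) for all k ≥ 1, where u_j(h) is the input-product vector defined by u_1(h) = u(h) and u_j(h) = [u_{j−1}(h); u_{j−1}(h)·u(h+j−1)], and R_j is the j-th bilinear reachability block (R_1 = B, R_j = [A R_{j−1}, N R_{j−1}]). -/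
open Matrix

lemma state_expansion {n : ℕ} (A N : Matrix (Fin n) (Fin n) ℝ)
    (B : Fin n → ℝ) (u : ℕ → ℝ) (k : ℕ) :
    bstate A N B u k =
      ∑ J ∈ Finset.range k, Rblk A N B J *ᵥ Uvec u J (k - 1 - J) := by
  induction k with
  | zero => simp [bstate]
  | succ k ih =>
    rw [bstate, ih, Finset.sum_range_succ']
    have h0 : Rblk A N B 0 *ᵥ Uvec u 0 (k + 1 - 1 - 0) = u k • B := by
      funext x
      simp [Rblk, Uvec, Matrix.mulVec, dotProduct, mul_comm,
        show Fintype.card (iota 0) = 1 from rfl]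
    rw [h0]
    have hstep : ∀ J ∈ Finset.range k,
        Rblk A N B (J + 1) *ᵥ Uvec u (J + 1) (k + 1 - 1 - (J + 1)) =
        A *ᵥ (Rblk A N B J *ᵥ Uvec u J (k - 1 - J))
          + u k • (N *ᵥ (Rblk A N B J *ᵥ Uvec u J (k - 1 - J))) := by
      intro J hJ
      rw [Finset.mem_range] at hJ
      have h1 : k + 1 - 1 - (J + 1) = k - 1 - J := by omega
      have h2 : k - 1 - J + J + 1 = k := by omega
      have hU : Uvec u (J + 1) (k - 1 - J) =
          Sum.elim (Uvec u J (k - 1 - J)) (fun i' => Uvec u J (k - 1 - J) i' * u k) := by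
        funext i
        simp [Uvec, h2]
      rw [h1, show Rblk A N B (J+1) =
        Matrix.fromCols (A * Rblk A N B J) (N * Rblk A N B J) from rfl, hU]
      erw [Matrix.fromCols_mulVec_sumElim]
      congr 1
      · rw [Matrix.mulVec_mulVec]
      · funext x
        simp only [Matrix.mulVec_mulVec, Matrix.mulVec, dotProduct,
          Pi.smul_apply, smul_eq_mul, Finset.mul_sum]
        exact Finset.sum_congr rfl fun i _ => by ring
    rw [Finset.sum_congr rfl hstep, Finset.sum_add_distrib]
    have hA : ∀ (M : Matrix (Fin n) (Fin n) ℝ) (f : ℕ → Fin n → ℝ),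
        M *ᵥ ∑ J ∈ Finset.range k, f J = ∑ J ∈ Finset.range k, M *ᵥ f J := by
      intro M f
      funext x
      simp only [Matrix.mulVec, dotProduct, Finset.sum_apply, Finset.mul_sum]
      rw [Finset.sum_comm]
    rw [hA, ← Finset.smul_sum, hA]

/-- `y_k = Σ_{j=1}^k (C R_j) · u_j(k−j)`; with zero-based indexing
`J = j - 1` this reads `y k = Σ_{J<k} (C ⬝ Rblk J) ⬝ᵥ Uvec J (k-1-J)`. -/
theorem output_markov_expansion {n : ℕ} (A N : Matrix (Fin n) (Fin n) ℝ)
    (B C : Fin n → ℝ) (u : ℕ → ℝ) (k : ℕ) (hk : 1 ≤ k) :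
    C ⬝ᵥ bstate A N B u k =
      ∑ J ∈ Finset.range k, ∑ i : iota J,
        (C ᵥ* Rblk A N B J) i * Uvec u J (k - 1 - J) i := by
  rw [state_expansion]
  have hd : C ⬝ᵥ ∑ J ∈ Finset.range k, Rblk A N B J *ᵥ Uvec u J (k - 1 - J) =
      ∑ J ∈ Finset.range k, C ⬝ᵥ (Rblk A N B J *ᵥ Uvec u J (k - 1 - J)) := by
    simp [dotProduct, Finset.mul_sum]
    rw [Finset.sum_comm]
  rw [hd]
  refine Finset.sum_congr rfl fun J _ => ?_
  rw [dotProduct_mulVec]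
  rfl
end
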